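/- The order of the subgroup D_n of Graphs(n+1) ⋊ S_{n+1} generated by x_1,...,x_n is 2^((n+1)(n-2)/2) · (n+1)!, for n ≥ 2. -/

import Mathlib

open Equiv Finset

abbrev Vtx (n : ℕ) := Fin (n+1)
abbrev Edge (n : ℕ) := {e : Sym2 (Vtx n) // ¬ e.IsDiag}
abbrev Graphs (n : ℕ) := Edge n → ZMod 2

/-- relabelling of edges by a permutation of vertices -/
def permEdge {n : ℕ} (σ : Perm (Vtx n)) : Edge n ≃ Edge n where
  toFun e := ⟨Sym2.map σ e.1, by
    simpa [Sym2.isDiag_map σ.injective] using e.2⟩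
  invFun e := ⟨Sym2.map σ.symm e.1, by
    simpa [Sym2.isDiag_map σ.symm.injective] using e.2⟩
  left_inv e := by
    ext1
    simp [Sym2.map_map]
  right_inv e := by
    ext1
    simp [Sym2.map_map]

/-- action of a vertex permutation on graphs -/
def gact {n : ℕ} (σ : Perm (Vtx n)) : Graphs n ≃+ Graphs n where
  toFun g := fun e => g ((permEdge σ).symm e)
  invFun g := fun e => g (permEdge σ e)
  left_inv g := by funext e; simp
  right_inv g := by funext e; simp
  map_add' g h := rfl

lemma gact_mul {n : ℕ} (σ τ : Perm (Vtx n)) (g : Graphs n) :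
    gact (σ * τ) g = gact σ (gact τ g) := by
  funext e
  simp only [gact, AddEquiv.coe_mk, Equiv.coe_fn_mk, Equiv.symm]
  congr 1
  ext1
  simp [permEdge, Sym2.map_map]
  rfl

/-- the action as a homomorphism to automorphisms, multiplicatively -/
def φn (n : ℕ) : Perm (Vtx n) →* MulAut (Multiplicative (Graphs n)) where
  toFun σ := AddEquiv.toMultiplicative (gact σ)
  map_one' := by
    ext g
    simp [gact, permEdge]
    first | simp [Equiv.Perm.one_symm] | (congr 1; ext1; simp [Sym2.map_id']) | rfl
  map_mul' σ τ := by
    ext g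
    exact congrFun (gact_mul σ τ g.toAdd) _

/-- the ambient group `Graphs(n+1) ⋊ S_{n+1}` -/
abbrev DG (n : ℕ) := SemidirectProduct (Multiplicative (Graphs n)) (Perm (Vtx n)) (φn n)

/-- the single-edge graph with edge `{u,v}` -/
def single {n : ℕ} (u v : Vtx n) : Graphs n :=
  fun e => if e.1 = s(u, v) then 1 else 0

/-- the generator `x_m = (e_{0m}, (0 m))` -/
def xgen {n : ℕ} (m : Vtx n) : DG n :=
  ⟨Multiplicative.ofAdd (single 0 m), Equiv.swap 0 m⟩

/-- the degree of a vertex in a graph -/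
def deg {n : ℕ} (g : Graphs n) (v : Vtx n) : ℕ :=
  (Finset.univ.filter (fun e : Edge n => v ∈ e.1 ∧ g e = 1)).card

/-- the number of edges of a graph -/
def nedges {n : ℕ} (g : Graphs n) : ℕ :=
  (Finset.univ.filter (fun e : Edge n => g e = 1)).card

/-- all degrees even and an even number of edges -/
def evenGraph {n : ℕ} (g : Graphs n) : Prop :=
  (∀ v : Vtx n, Even (deg g v)) ∧ Even (nedges g)

/-- the subgroup generated by the `x_m`, `m = 1, …, n` -/
def Dn (n : ℕ) : Subgroup (DG n) :=
  Subgroup.closure {x | ∃ m : Vtx n, m ≠ 0 ∧ x = xgen m}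

/-- the complete graph -/
def complete (n : ℕ) : Graphs n := fun _ => 1

/-!
The projection `D_n → S_{n+1}` is onto because the transpositions `(0 m)` generate `S_{n+1}`,
so `|D_n| = (n+1)! · |K|` where `K` is the group of graphs `g` with `(g, 1) ∈ D_n`.

For every element `(g, σ)` of `D_n`, the degree parities of `g` are those of a path from `0` to
`σ 0` and the edge parity of `g` is the sign of `σ`: this holds for the generators and is
preserved by products. Hence `K` lies in the kernel of the parity map recording the degree
parities at the vertices `1, …, n` and the edge parity.

Conversely, `x_a x_b x_a = (Δ(0,a,b), (a b))` and its conjugate by `x_c` is `(Δ(c,a,b), (a b))`,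
so all triangles through `0` are congruent modulo `K`. Then every graph is congruent modulo `K`
to a sum of star edges `0m` and one fixed triangle, and the parity map is injective on such sums.
So `K` is exactly the kernel of the parity map, which has order `2^(C(n+1,2) - (n+1))`.
-/

theorem eq_of_symm_of_replace {α β : Type*} {f : α → α → β} (symm : ∀ i j, f i j = f j i)
    (replace : ∀ i j k, i ≠ j → i ≠ k → j ≠ k → f i j = f i k)
    {i j p q : α} (hij : i ≠ j) (hpq : p ≠ q) : f i j = f p q := by
  have step (i j k : α) (hij : i ≠ j) (hik : i ≠ k) : f i j = f i k := by
    rcases eq_or_ne j k with rfl | hjk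
    · rfl
    · exact replace i j k hij hik hjk
  rcases eq_or_ne p i with rfl | hpi
  · exact step p j q hij hpq
  · rw [step i j p hij hpi.symm, symm]
    exact step p i q hpi hpq

theorem eq_ker_of_sup_range_eq_top {R M N : Type*} [Ring R] [AddCommGroup M] [AddCommGroup N]
    [Module R M] [Module R N] {P : Submodule R M} {f : M →ₗ[R] N} {g : N →ₗ[R] M}
    (hP : P ≤ LinearMap.ker f) (hfg : Function.Injective (f ∘ₗ g))
    (hsup : P ⊔ LinearMap.range g = ⊤) : P = LinearMap.ker f := by
  refine le_antisymm hP fun x hx => ?_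
  obtain ⟨y, hy, _, ⟨a, rfl⟩, rfl⟩ :=
    Submodule.mem_sup.1 (hsup ▸ Submodule.mem_top (x := x))
  have ha : a = 0 := hfg (by simpa [LinearMap.mem_ker.1 (hP hy)] using hx)
  simpa [ha] using hy

theorem card_ker_mul_card_of_surjective {R M N : Type*} [Ring R] [AddCommGroup M]
    [AddCommGroup N] [Module R M] [Module R N] {f : M →ₗ[R] N} (hf : Function.Surjective f) :
    Nat.card (LinearMap.ker f) * Nat.card N = Nat.card M := by
  have := f.toAddMonoidHom.ker.card_mul_index
  rwa [AddSubgroup.index_ker, AddMonoidHom.range_eq_top.2 hf, AddSubgroup.card_top] at this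

lemma choose_two_succ {n : ℕ} (hn : 2 ≤ n) :
    (n + 1).choose 2 = (n + 1) * (n - 2) / 2 + (n + 1) := by
  obtain ⟨m, rfl⟩ : ∃ m, n = m + 2 := ⟨n - 2, by omega⟩
  rw [Nat.choose_two_right, Nat.add_sub_cancel, Nat.add_sub_cancel,
    show (m + 2 + 1) * (m + 2) = (m + 2 + 1) * m + (m + 2 + 1) * 2 by ring,
    Nat.add_mul_div_right _ _ two_pos]

lemma eq_zero_of_neg_one_uzpow_eq_one {t : ZMod 2} (h : (-1 : ℤˣ) ^ t = 1) : t = 0 := by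
  obtain rfl | rfl : t = 0 ∨ t = 1 := by revert t; decide
  · rfl
  · simp at h

open Multiplicative SemidirectProduct

section

variable {n : ℕ}

def degParity : Graphs n →ₗ[ZMod 2] (Vtx n → ZMod 2) where
  toFun g v := ∑ e : Edge n with v ∈ e.1, g e
  map_add' g h := by ext v; simp [Finset.sum_add_distrib]
  map_smul' c g := by ext v; simp [Finset.mul_sum]

def edgeParity : Graphs n →ₗ[ZMod 2] ZMod 2 where
  toFun g := ∑ e, g e
  map_add' g h := by simp [Finset.sum_add_distrib]
  map_smul' c g := by simp [Finset.mul_sum]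

lemma degParity_apply (g : Graphs n) (v : Vtx n) :
    degParity g v = ∑ e : Edge n with v ∈ e.1, g e := rfl

lemma edgeParity_apply (g : Graphs n) : edgeParity g = ∑ e, g e := rfl

lemma single_eq_pi_single {u v : Vtx n} (h : u ≠ v) :
    single u v = Pi.single ⟨s(u, v), by simpa using h⟩ 1 := by
  ext e
  simp [single, Pi.single_apply, Subtype.ext_iff]

lemma single_comm (u v : Vtx n) : single u v = single v u := by
  ext e
  simp [single, Sym2.eq_swap]

lemma degParity_single {u v : Vtx n} (h : u ≠ v) :
    degParity (single u v) = Pi.single u 1 + Pi.single v 1 := by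
  ext w
  rw [degParity_apply, single_eq_pi_single h, Finset.sum_pi_single']
  rcases eq_or_ne w u with rfl | hu
  · simp [h]
  · rcases eq_or_ne w v with rfl | hv <;> simp [*]

lemma edgeParity_single {u v : Vtx n} (h : u ≠ v) : edgeParity (single u v) = 1 := by
  simp [edgeParity_apply, single_eq_pi_single h]

lemma gact_apply (σ : Perm (Vtx n)) (g : Graphs n) (e : Edge n) :
    gact σ g e = g ((permEdge σ).symm e) := rfl

lemma gact_single (σ : Perm (Vtx n)) (u v : Vtx n) :
    gact σ (single u v) = single (σ u) (σ v) := by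
  ext e
  simp only [gact_apply, single, permEdge, Equiv.coe_fn_symm_mk]
  congr 1
  exact propext ⟨fun h => by simpa [Sym2.map_map] using congrArg (Sym2.map σ) h,
    fun h => by simp [h]⟩

lemma degParity_gact (σ : Perm (Vtx n)) (g : Graphs n) :
    degParity (gact σ g) = degParity g ∘ σ.symm := by
  ext v
  simp only [Function.comp_apply, degParity_apply, Finset.sum_filter]
  refine (Fintype.sum_equiv (permEdge σ) _ _ fun e => ?_).symm
  simp [gact_apply, permEdge, Sym2.mem_map, Sym2.map_map, ← Equiv.eq_symm_apply]

lemma edgeParity_gact (σ : Perm (Vtx n)) (g : Graphs n) :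
    edgeParity (gact σ g) = edgeParity g :=
  (Fintype.sum_equiv (permEdge σ) _ _ fun e => by simp [gact_apply]).symm

lemma gact_one (g : Graphs n) : gact 1 g = g :=
  congrArg toAdd (DFunLike.congr_fun (map_one (φn n)) (ofAdd g))

lemma mk_mul_mk (g h : Graphs n) (σ τ : Perm (Vtx n)) :
    (⟨ofAdd g, σ⟩ : DG n) * ⟨ofAdd h, τ⟩ = ⟨ofAdd (g + gact σ h), σ * τ⟩ := rfl

lemma inv_mk (g : Graphs n) (σ : Perm (Vtx n)) :
    (⟨ofAdd g, σ⟩ : DG n)⁻¹ = ⟨ofAdd (gact σ⁻¹ (-g)), σ⁻¹⟩ := rfl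

lemma pi_single_comp_perm_symm (σ : Perm (Vtx n)) (v : Vtx n) :
    (Pi.single v 1 : Vtx n → ZMod 2) ∘ σ.symm = Pi.single (σ v) 1 := by
  rw [Pi.single_comp_equiv, Equiv.symm_symm]

def paritySubgroup (n : ℕ) : Subgroup (DG n) where
  carrier := {p | degParity (toAdd p.left) = Pi.single 0 1 + Pi.single (p.right 0) 1 ∧
    Perm.sign p.right = (-1) ^ edgeParity (toAdd p.left)}
  one_mem' := ⟨by simp [ZModModule.add_self], by simp⟩
  mul_mem' := by
    rintro ⟨g, σ⟩ ⟨h, τ⟩ ⟨hgd, hge⟩ ⟨hhd, hhe⟩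
    refine ⟨?_, ?_⟩
    · change degParity (toAdd g + gact σ (toAdd h)) = _
      rw [map_add, degParity_gact, hgd, hhd, Pi.add_comp, pi_single_comp_perm_symm,
        pi_single_comp_perm_symm]
      simp [ZModModule.add_add_add_cancel]
    · change Perm.sign (σ * τ) = (-1) ^ edgeParity (toAdd g + gact σ (toAdd h))
      rw [Perm.sign_mul, map_add, edgeParity_gact, uzpow_add, hge, hhe]
  inv_mem' := by
    rintro ⟨g, σ⟩ ⟨hd, he⟩
    refine ⟨?_, ?_⟩
    · change degParity (gact σ⁻¹ (-toAdd g)) = _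
      rw [ZModModule.neg_eq_self, degParity_gact, hd, Pi.add_comp, pi_single_comp_perm_symm,
        pi_single_comp_perm_symm]
      simp [add_comm]
    · change Perm.sign σ⁻¹ = (-1) ^ edgeParity (gact σ⁻¹ (-toAdd g))
      rw [ZModModule.neg_eq_self, edgeParity_gact, ← he, Perm.sign_inv]

lemma xgen_mem {m : Vtx n} (hm : m ≠ 0) : xgen m ∈ Dn n :=
  Subgroup.subset_closure ⟨m, hm, rfl⟩

lemma Dn_le_paritySubgroup : Dn n ≤ paritySubgroup n := by
  rw [Dn, Subgroup.closure_le]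
  rintro _ ⟨m, hm, rfl⟩
  refine ⟨?_, ?_⟩
  · change degParity (single 0 m) = _ + Pi.single (swap 0 m 0) 1
    rw [degParity_single hm.symm, swap_apply_left]
  · change Perm.sign (swap 0 m) = _ ^ edgeParity (single 0 m)
    rw [edgeParity_single hm.symm, Perm.sign_swap hm.symm, uzpow_one]

lemma map_rightHom_Dn : (Dn n).map rightHom = ⊤ := by
  have swap_zero_mem (m : Vtx n) : swap 0 m ∈ (Dn n).map rightHom := by
    rcases eq_or_ne m 0 with rfl | hm
    · exact (swap_self (0 : Vtx n)).symm ▸ one_mem _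
    · exact ⟨xgen m, xgen_mem hm, rfl⟩
  rw [eq_top_iff, ← Perm.closure_isSwap, Subgroup.closure_le]
  rintro _ ⟨a, b, -, rfl⟩
  exact SubmonoidClass.swap_mem_trans _ (swap_comm a 0 ▸ swap_zero_mem a) (swap_zero_mem b)

def graphKernel (n : ℕ) : AddSubgroup (Graphs n) :=
  Subgroup.toAddSubgroup' ((Dn n).comap inl)

lemma mem_graphKernel {g : Graphs n} : g ∈ graphKernel n ↔ (⟨ofAdd g, 1⟩ : DG n) ∈ Dn n :=
  Iff.rfl

lemma add_mem_graphKernel {g h : Graphs n} {σ : Perm (Vtx n)}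
    (hg : (⟨ofAdd g, σ⟩ : DG n) ∈ Dn n) (hh : (⟨ofAdd h, σ⟩ : DG n) ∈ Dn n) :
    g + h ∈ graphKernel n := by
  have := mul_mem hg (inv_mem hh)
  rwa [inv_mk, mk_mul_mk, ← gact_mul, mul_inv_cancel, gact_one, ZModModule.neg_eq_self] at this

def parityMap : Graphs n →ₗ[ZMod 2] (Fin n → ZMod 2) × ZMod 2 :=
  (LinearMap.funLeft (ZMod 2) (ZMod 2) Fin.succ ∘ₗ degParity).prod edgeParity

lemma parityMap_apply (g : Graphs n) :
    parityMap g = (fun i => degParity g i.succ, edgeParity g) := rfl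

lemma graphKernel_le_ker_parityMap :
    (graphKernel n).toZModSubmodule 2 ≤ LinearMap.ker parityMap := by
  intro g hg
  obtain ⟨hdeg, hsign⟩ := Dn_le_paritySubgroup (mem_graphKernel.1 hg)
  replace hdeg : degParity g = 0 := by simpa [ZModModule.add_self] using hdeg
  replace hsign : edgeParity g = 0 :=
    eq_zero_of_neg_one_uzpow_eq_one (hsign.symm.trans (map_one _))
  rw [LinearMap.mem_ker, parityMap_apply, hdeg, hsign]
  rfl

def triangle (u v w : Vtx n) : Graphs n := single u v + single u w + single v w

lemma gact_triangle (σ : Perm (Vtx n)) (u v w : Vtx n) :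
    gact σ (triangle u v w) = triangle (σ u) (σ v) (σ w) := by
  simp only [triangle, map_add, gact_single]

lemma degParity_triangle {u v w : Vtx n} (huv : u ≠ v) (huw : u ≠ w) (hvw : v ≠ w) :
    degParity (triangle u v w) = 0 := by
  rw [triangle, map_add, map_add, degParity_single huv, degParity_single huw,
    degParity_single hvw]
  abel_nf
  simp only [two_zsmul, ZModModule.add_self]

lemma edgeParity_triangle {u v w : Vtx n} (huv : u ≠ v) (huw : u ≠ w) (hvw : v ≠ w) :
    edgeParity (triangle u v w) = 1 := by
  rw [triangle, map_add, map_add, edgeParity_single huv, edgeParity_single huw,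
    edgeParity_single hvw]
  decide

lemma xgen_mul_xgen_mul_xgen {a b : Vtx n} (ha : a ≠ 0) (hb : b ≠ 0) (hab : a ≠ b) :
    xgen a * xgen b * xgen a = ⟨ofAdd (triangle 0 a b), swap a b⟩ := by
  have hperm : swap 0 a * swap 0 b * swap 0 a = swap a b := by
    rw [swap_comm 0 b, swap_mul_swap_mul_swap hb hab.symm]
  have hgraph : single 0 a + gact (swap 0 a) (single 0 b) +
      gact (swap 0 a * swap 0 b) (single 0 a) = triangle 0 a b := by
    simp only [gact_single, Perm.mul_apply, swap_apply_left, swap_apply_right,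
      swap_apply_of_ne_of_ne hb hab.symm, swap_apply_of_ne_of_ne ha hab]
    rw [triangle, single_comm b 0]
    abel
  rw [xgen, xgen, mk_mul_mk, mk_mul_mk, hperm, hgraph]

lemma xgen_mul_mk_triangle_mul_xgen {a b c : Vtx n} (ha : a ≠ 0) (hb : b ≠ 0)
    (hac : a ≠ c) (hbc : b ≠ c) :
    xgen c * ⟨ofAdd (triangle 0 a b), swap a b⟩ * xgen c =
      ⟨ofAdd (triangle c a b), swap a b⟩ := by
  have hperm : swap 0 c * swap a b * swap 0 c = swap a b := by
    have := swap_apply_apply (swap 0 c) a b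
    rwa [swap_apply_of_ne_of_ne ha hac, swap_apply_of_ne_of_ne hb hbc, swap_inv, eq_comm] at this
  have hgraph : single 0 c + gact (swap 0 c) (triangle 0 a b) +
      gact (swap 0 c * swap a b) (single 0 c) = triangle c a b := by
    simp only [gact_triangle, gact_single, Perm.mul_apply, swap_apply_left, swap_apply_right,
      swap_apply_of_ne_of_ne ha hac, swap_apply_of_ne_of_ne hb hbc,
      swap_apply_of_ne_of_ne ha.symm hb.symm, swap_apply_of_ne_of_ne hac.symm hbc.symm]
    rw [single_comm c 0, add_right_comm, ZModModule.add_self, zero_add]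
  rw [xgen, mk_mul_mk, mk_mul_mk, hperm, hgraph]

lemma triangle_add_triangle_mem_graphKernel {a b c : Vtx n} (ha : a ≠ 0) (hb : b ≠ 0)
    (hc : c ≠ 0) (hab : a ≠ b) (hac : a ≠ c) (hbc : b ≠ c) :
    triangle 0 c a + triangle 0 c b ∈ graphKernel n := by
  have key : triangle 0 c a + triangle 0 c b = triangle 0 a b + triangle c a b := by
    simp only [triangle, single_comm c a, single_comm c b]
    abel_nf
    simp only [two_zsmul, ZModModule.add_self, zero_add, add_zero]
  have hy := xgen_mul_xgen_mul_xgen ha hb hab ▸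
    mul_mem (mul_mem (xgen_mem ha) (xgen_mem hb)) (xgen_mem ha)
  have hz := xgen_mul_mk_triangle_mul_xgen ha hb hac hbc ▸
    mul_mem (mul_mem (xgen_mem hc) hy) (xgen_mem hc)
  rw [key]
  exact add_mem_graphKernel hy hz

lemma triangle_swap (u v w : Vtx n) : triangle u v w = triangle u w v := by
  rw [triangle, triangle, single_comm v w]
  abel

lemma mk_triangle_eq_mk_triangle {i j p q : Fin n} (hij : i ≠ j) (hpq : p ≠ q) :
    (triangle 0 i.succ j.succ : Graphs n ⧸ graphKernel n) = triangle 0 p.succ q.succ := by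
  refine eq_of_symm_of_replace
    (f := fun i j : Fin n => (triangle 0 i.succ j.succ : Graphs n ⧸ graphKernel n))
    (fun i j => by rw [triangle_swap]) (fun i j k hij hik hjk => ?_) hij hpq
  rw [QuotientAddGroup.eq_iff_sub_mem, ZModModule.sub_eq_add]
  exact triangle_add_triangle_mem_graphKernel (Fin.succ_ne_zero j) (Fin.succ_ne_zero k)
    (Fin.succ_ne_zero i) (Fin.succ_injective _ |>.ne hjk) (Fin.succ_injective _ |>.ne hij.symm)
    (Fin.succ_injective _ |>.ne hik.symm)

def starTriangle (p q : Fin n) : (Fin n → ZMod 2) × ZMod 2 →ₗ[ZMod 2] Graphs n :=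
  (Fintype.linearCombination (ZMod 2) fun i => single 0 i.succ).coprod
    (LinearMap.toSpanSingleton (ZMod 2) _ (triangle 0 p.succ q.succ))

lemma starTriangle_apply (p q : Fin n) (w : Fin n → ZMod 2) (t : ZMod 2) :
    starTriangle p q (w, t) = ∑ i, w i • single 0 i.succ + t • triangle 0 p.succ q.succ := by
  simp [starTriangle, Fintype.linearCombination_apply]

lemma graphKernel_sup_range_starTriangle {p q : Fin n} (hpq : p ≠ q) :
    (graphKernel n).toZModSubmodule 2 ⊔ LinearMap.range (starTriangle p q) = ⊤ := by
  set M := (graphKernel n).toZModSubmodule 2 ⊔ LinearMap.range (starTriangle p q)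
  have star_mem (i : Fin n) : single 0 i.succ ∈ M :=
    Submodule.mem_sup_right ⟨(Pi.single i 1, 0), by simp [starTriangle_apply, Pi.single_apply]⟩
  have triangle_mem {i j : Fin n} (hij : i ≠ j) : triangle 0 i.succ j.succ ∈ M := by
    have hT : triangle 0 p.succ q.succ ∈ M :=
      Submodule.mem_sup_right ⟨(0, 1), by simp [starTriangle_apply]⟩
    have hK : triangle 0 i.succ j.succ - triangle 0 p.succ q.succ ∈ M :=
      Submodule.mem_sup_left
        (QuotientAddGroup.eq_iff_sub_mem.1 (mk_triangle_eq_mk_triangle hij hpq))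
    simpa using add_mem hK hT
  have single_mem {u v : Vtx n} (huv : u ≠ v) : single u v ∈ M := by
    rcases Fin.eq_zero_or_eq_succ u with rfl | ⟨i, rfl⟩ <;>
      rcases Fin.eq_zero_or_eq_succ v with rfl | ⟨j, rfl⟩
    · exact absurd rfl huv
    · exact star_mem j
    · exact single_comm (0 : Vtx n) _ ▸ star_mem i
    · have hij : i ≠ j := fun h => huv (h ▸ rfl)
      have : single i.succ j.succ =
          triangle 0 i.succ j.succ + single 0 i.succ + single 0 j.succ := by
        rw [triangle]
        abel_nf
        simp only [two_zsmul, ZModModule.add_self, zero_add]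
      rw [this]
      exact add_mem (add_mem (triangle_mem hij) (star_mem i)) (star_mem j)
  rw [eq_top_iff, ← (Pi.basisFun (ZMod 2) (Edge n)).span_eq, Submodule.span_le]
  rintro _ ⟨⟨e, he⟩, rfl⟩
  induction e using Sym2.ind with
  | _ u v =>
    have huv : u ≠ v := by simpa using he
    rw [Pi.basisFun_apply, ← single_eq_pi_single huv]
    exact single_mem huv

lemma injective_parityMap_comp_starTriangle {p q : Fin n} (hpq : p ≠ q) :
    Function.Injective (parityMap ∘ₗ starTriangle p q) := by
  have hp : (0 : Vtx n) ≠ p.succ := (Fin.succ_ne_zero p).symm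
  have hq : (0 : Vtx n) ≠ q.succ := (Fin.succ_ne_zero q).symm
  have hpq' : p.succ ≠ q.succ := Fin.succ_injective _ |>.ne hpq
  rw [← LinearMap.ker_eq_bot, LinearMap.ker_eq_bot']
  rintro ⟨w, t⟩ h
  have hdeg (i : Fin n) : degParity (starTriangle p q (w, t)) i.succ = w i := by
    simp [starTriangle_apply, degParity_single (Fin.succ_ne_zero _).symm,
      degParity_triangle hp hq hpq', Pi.single_apply]
  have hedge : edgeParity (starTriangle p q (w, t)) = ∑ i, w i + t := by
    simp [starTriangle_apply, edgeParity_single (Fin.succ_ne_zero _).symm,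
      edgeParity_triangle hp hq hpq']
  have hw : w = 0 := funext fun i => by
    rw [← hdeg]
    exact congrFun (congrArg Prod.fst h) i
  subst hw
  have ht : t = 0 := by simpa [parityMap_apply, hedge] using congrArg Prod.snd h
  rw [ht, Prod.mk_zero_zero]

lemma card_graphKernel (hn : 2 ≤ n) :
    Nat.card (graphKernel n) = 2 ^ ((n + 1) * (n - 2) / 2) := by
  have hpq : (⟨0, by omega⟩ : Fin n) ≠ ⟨1, by omega⟩ := by simp
  have hinj := injective_parityMap_comp_starTriangle hpq
  have hsurj : Function.Surjective (parityMap (n := n)) := by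
    have := Finite.injective_iff_surjective.1 hinj
    rw [LinearMap.coe_comp] at this
    exact this.of_comp
  have hker := eq_ker_of_sup_range_eq_top graphKernel_le_ker_parityMap hinj
    (graphKernel_sup_range_starTriangle hpq)
  have hcard := card_ker_mul_card_of_surjective hsurj
  have hA : Nat.card ((Fin n → ZMod 2) × ZMod 2) = 2 ^ (n + 1) := by
    simp [pow_succ]
  have hG : Nat.card (Graphs n) = 2 ^ (n + 1).choose 2 := by
    rw [Nat.card_fun, Nat.card_zmod, Nat.card_eq_fintype_card, Sym2.card_subtype_not_diag,
      Fintype.card_fin]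
  rw [← hker, hA, hG, choose_two_succ hn, pow_add 2 ((n + 1) * (n - 2) / 2)] at hcard
  exact Nat.eq_of_mul_eq_mul_right (by positivity : 0 < 2 ^ (n + 1)) hcard

lemma card_Dn : Nat.card (Dn n) = Nat.card (graphKernel n) * (n + 1).factorial := by
  have hker : Nat.card ((rightHom : DG n →* Perm (Vtx n)).ker.subgroupOf (Dn n)) =
      Nat.card (graphKernel n) := by
    rw [← Subgroup.inf_subgroupOf_right, ← range_inl_eq_ker_rightHom, ← Subgroup.map_comap_eq,
      Nat.card_congr (Subgroup.subgroupOfEquivOfLe (Subgroup.map_comap_le _ _)).toEquiv,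
      Subgroup.card_map_of_injective inl_injective]
    rfl
  have hrelIndex :
      (rightHom : DG n →* Perm (Vtx n)).ker.relIndex (Dn n) = (n + 1).factorial := by
    rw [Subgroup.relIndex_ker, map_rightHom_Dn, Subgroup.card_top, Nat.card_eq_fintype_card,
      Fintype.card_perm, Fintype.card_fin]
  rw [← hker, ← hrelIndex]
  exact (Subgroup.card_mul_index _).symm

end

/-- For `n ≥ 2`, the subgroup `D_n` of `Graphs(n+1) ⋊ S_{n+1}` generated by
`x_1, …, x_n` has order `2^((n+1)(n-2)/2) · (n+1)!`. -/
theorem stmt11 (n : ℕ) (hn : 2 ≤ n) :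
    Nat.card (Dn n) = 2 ^ ((n+1)*(n-2)/2) * Nat.factorial (n+1) := by
  rw [card_Dn, card_graphKernel hn]
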